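/- The (A⊗A)-linear maps Δ_i : P_i → (P ⊗_A P)_i = ⊕_{j+l=i} P_j ⊗_A P_l determined by Δ_i(e_i) = Σ_{j+l=i} e_j ⊗ e_l form a chain map Δ_P : P → P ⊗_A P lifting the identity map of A; that is, d^{P⊗_A P} ∘ Δ_i = Δ_{i−1} ∘ d_i for all i ≥ 1, where d^{P⊗_A P}(p⊗q) = d(p)⊗q + (−1)^{|p|} p⊗d(q), and in degree 0 the map Δ_0 is compatible with the augmentation under the identification A ⊗_A A ≅ A. -/

import Mathlib

open scoped TensorProduct DirectSum
open MulOpposite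

set_option synthInstance.maxHeartbeats 1000000
set_option maxHeartbeats 1000000

noncomputable section

universe u

namespace HLPaper

variable {k : Type u} [Field k]

def pcast {P : ℤ → Type u} [∀ i, AddCommGroup (P i)] [∀ i, Module k (P i)]
    {i j : ℤ} (h : i = j) : P i →ₗ[k] P j := by subst h; exact LinearMap.id

structure Bimod (A : Type u) [Ring A] [Algebra k A]
    (P : ℤ → Type u) [∀ i, AddCommGroup (P i)] [∀ i, Module k (P i)] : Type u where
  actL : ∀ i, A →ₐ[k] Module.End k (P i)
  actR : ∀ i, Aᵐᵒᵖ →ₐ[k] Module.End k (P i)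

variable {A : Type u} [Ring A] [Algebra k A]
variable {P : ℤ → Type u} [∀ i, AddCommGroup (P i)] [∀ i, Module k (P i)]

def Bimod.IsCommuting (act : Bimod (k := k) A P) : Prop :=
  ∀ (i : ℤ) (a : A) (b : Aᵐᵒᵖ), act.actL i a * act.actR i b = act.actR i b * act.actL i a

def IsBimap (act : Bimod (k := k) A P) {i j : ℤ} (φ : P i →ₗ[k] P j) : Prop :=
  (∀ a : A, φ ∘ₗ act.actL i a = act.actL j a ∘ₗ φ) ∧
  (∀ b : Aᵐᵒᵖ, φ ∘ₗ act.actR i b = act.actR j b ∘ₗ φ)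

def IsBimapToAlg (act : Bimod (k := k) A P) {m : ℤ} (f : P m →ₗ[k] A) : Prop :=
  (∀ (a : A) (x : P m), f (act.actL m a x) = a * f x) ∧
  (∀ (a : A) (x : P m), f (act.actR m (op a) x) = f x * a)

def envModule (act : Bimod (k := k) A P) (h : act.IsCommuting) (i : ℤ) :
    Module (A ⊗[k] Aᵐᵒᵖ) (P i) :=
  Module.compHom _ (Algebra.TensorProduct.lift (act.actL i) (act.actR i)
    (fun a b => h i a b)).toRingHom

/-! ### Quotient helpers (total versions of `liftQ`/`mapQ`) -/

/-- `Submodule.liftQ`, extended by zero if the compatibility condition fails.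
(In all uses below the condition does hold.) -/
def liftQOr0 {X Z : Type u} [AddCommGroup X] [Module k X] [AddCommGroup Z] [Module k Z]
    (S : Submodule k X) (f : X →ₗ[k] Z) : (X ⧸ S) →ₗ[k] Z :=
  letI := Classical.dec (S ≤ LinearMap.ker f)
  if h : S ≤ LinearMap.ker f then S.liftQ f h else 0

/-- `Submodule.mapQ`, extended by zero if the compatibility condition fails. -/
def mapQOr0 {X Y : Type u} [AddCommGroup X] [Module k X] [AddCommGroup Y] [Module k Y]
    (S : Submodule k X) (T : Submodule k Y) (f : X →ₗ[k] Y) : (X ⧸ S) →ₗ[k] (Y ⧸ T) :=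
  letI := Classical.dec (S ≤ T.comap f)
  if h : S ≤ T.comap f then Submodule.mapQ S T f h else 0

/-! ### The balanced tensor product `P ⊗_A P` -/

/-- The balancing subspace defining `P j ⊗_A P l` as a quotient of `P j ⊗ₖ P l`. -/
def bal (act : Bimod (k := k) A P) (j l : ℤ) : Submodule k (P j ⊗[k] P l) :=
  Submodule.span k
    {z | ∃ (a : A) (x : P j) (y : P l),
      z = (act.actR j (op a) x) ⊗ₜ[k] y - x ⊗ₜ[k] (act.actL l a y)}

/-- The component `P j ⊗_A P l` of the tensor product of complexes `P ⊗_A P`. -/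
abbrev TensA (act : Bimod (k := k) A P) (j l : ℤ) : Type u :=
  (P j ⊗[k] P l) ⧸ bal act j l

instance (act : Bimod (k := k) A P) (j l : ℤ) : AddCommGroup (TensA act j l) :=
  inferInstanceAs (AddCommGroup ((P j ⊗[k] P l) ⧸ bal act j l))

instance (act : Bimod (k := k) A P) (j l : ℤ) : Module k (TensA act j l) :=
  inferInstanceAs (Module k ((P j ⊗[k] P l) ⧸ bal act j l))

/-- The image of an elementary tensor `x ⊗ y` in `P j ⊗_A P l`. -/
def tmulA (act : Bimod (k := k) A P) {j l : ℤ} (x : P j) (y : P l) : TensA act j l :=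
  Submodule.Quotient.mk (x ⊗ₜ[k] y)

/-- Cast for `TensA` along equalities of indices. -/
def tcast (act : Bimod (k := k) A P) {j j' l l' : ℤ} (h1 : j = j') (h2 : l = l') :
    TensA act j l →ₗ[k] TensA act j' l' := by subst h1; subst h2; exact LinearMap.id

/-- The map `P j ⊗_A P l → P j' ⊗_A P l'` induced by a pair of bimodule maps. -/
def mapTensA (act : Bimod (k := k) A P) {j l j' l' : ℤ}
    (φ : P j →ₗ[k] P j') (ψ : P l →ₗ[k] P l') : TensA act j l →ₗ[k] TensA act j' l' :=
  mapQOr0 _ _ (TensorProduct.map φ ψ)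

/-- Left action of `A` on `P j ⊗_A P l` (through the left factor). -/
def actLTensA (act : Bimod (k := k) A P) (j l : ℤ) (a : A) :
    TensA act j l →ₗ[k] TensA act j l :=
  mapTensA act (act.actL j a) LinearMap.id

/-- Right action of `A` on `P j ⊗_A P l` (through the right factor). -/
def actRTensA (act : Bimod (k := k) A P) (j l : ℤ) (b : Aᵐᵒᵖ) :
    TensA act j l →ₗ[k] TensA act j l :=
  mapTensA act LinearMap.id (act.actR l b)

/-! ### The total complex of `P ⊗_A P` in a given degree -/

/-- Index set of the degree-`i` component of a total complex. -/
abbrev DiagIdx (i : ℤ) : Type := {p : ℤ × ℤ // p.1 + p.2 = i}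

/-- The degree-`i` component `(P ⊗_A P)_i = ⨁_{j+l=i} P j ⊗_A P l`. -/
abbrev DTarget (act : Bimod (k := k) A P) (i : ℤ) : Type u :=
  ⨁ (p : DiagIdx i), TensA act p.1.1 p.1.2

instance (act : Bimod (k := k) A P) (i : ℤ) : AddCommGroup (DTarget act i) :=
  inferInstanceAs (AddCommGroup (⨁ (p : DiagIdx i), TensA act p.1.1 p.1.2))

instance (act : Bimod (k := k) A P) (i : ℤ) : Module k (DTarget act i) :=
  inferInstanceAs (Module k (⨁ (p : DiagIdx i), TensA act p.1.1 p.1.2))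

/-- Inclusion of the `(j,l)` component into `(P ⊗_A P)_{j+l}`. -/
def inclDT (act : Bimod (k := k) A P) {i : ℤ} (p : DiagIdx i) :
    TensA act p.1.1 p.1.2 →ₗ[k] DTarget act i :=
  DirectSum.lof k (DiagIdx i) (fun q : DiagIdx i => TensA act q.1.1 q.1.2) p

/-- The Koszul-signed differential on the total complex `P ⊗_A P`:
`d(p ⊗ q) = d(p) ⊗ q + (−1)^{|p|} p ⊗ d(q)`. -/
def dDT (act : Bimod (k := k) A P) (d : ∀ i, P i →ₗ[k] P (i - 1)) (i : ℤ) :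
    DTarget act i →ₗ[k] DTarget act (i - 1) :=
  DirectSum.toModule k (DiagIdx i) (DTarget act (i - 1)) fun p =>
    (inclDT act (⟨(p.1.1 - 1, p.1.2), by have := p.2; omega⟩ : DiagIdx (i - 1))) ∘ₗ
        mapTensA act (d p.1.1) LinearMap.id
      + (p.1.1.negOnePow : ℤ) •
        ((inclDT act (⟨(p.1.1, p.1.2 - 1), by have := p.2; omega⟩ : DiagIdx (i - 1))) ∘ₗ
          mapTensA act LinearMap.id (d p.1.2))

/-! ### Collapse maps `(f ⊗ 1)` and `(1 ⊗ f)` on `P ⊗_A P`, using `A ⊗_A P ≅ P ≅ P ⊗_A A` -/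

/-- `(f ⊗ 1) : P m ⊗_A P l → P l`, `x ⊗ y ↦ f(x) · y`, for `f : P m → A`. -/
def collapseL (act : Bimod (k := k) A P) {m : ℤ} (f : P m →ₗ[k] A) (l : ℤ) :
    TensA act m l →ₗ[k] P l :=
  liftQOr0 _ (TensorProduct.lift ((act.actL l).toLinearMap ∘ₗ f))

/-- `(1 ⊗ f) : P j ⊗_A P m → P j`, `x ⊗ y ↦ x · f(y)`, for `f : P m → A`
(the Koszul sign is inserted at use sites). -/
def collapseR (act : Bimod (k := k) A P) {m : ℤ} (f : P m →ₗ[k] A) (j : ℤ) :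
    TensA act j m →ₗ[k] P j :=
  liftQOr0 _ (TensorProduct.lift
    (LinearMap.flip ((act.actR j).toLinearMap ∘ₗ
      (opLinearEquiv k : A ≃ₗ[k] Aᵐᵒᵖ).toLinearMap ∘ₗ f)))

/-- The total collapse map `(f ⊗ 1) : (P ⊗_A P)_i → P_{i-m}` for a cochain
`f : P m → A`; it is `f(x) · y` on the component `(m, i-m)` and `0` on all others. -/
def fTensorOne (act : Bimod (k := k) A P) {m : ℤ} (f : P m →ₗ[k] A) (i : ℤ) :
    DTarget act i →ₗ[k] P (i - m) :=
  DirectSum.toModule k (DiagIdx i) (P (i - m)) fun p =>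
    if h : p.1.1 = m then
      pcast (show p.1.2 = i - m by have := p.2; omega) ∘ₗ
        collapseL act f p.1.2 ∘ₗ tcast act h rfl
    else 0

/-- The total collapse map `(1 ⊗ f) : (P ⊗_A P)_i → P_{i-m}` for a cochain
`f : P m → A`, with the Koszul sign `(−1)^{m·j}` on the component `(j, m)`. -/
def oneTensorF (act : Bimod (k := k) A P) {m : ℤ} (f : P m →ₗ[k] A) (i : ℤ) :
    DTarget act i →ₗ[k] P (i - m) :=
  DirectSum.toModule k (DiagIdx i) (P (i - m)) fun p =>
    if h : p.1.2 = m then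
      ((m * p.1.1).negOnePow : ℤ) •
        (pcast (show p.1.1 = i - m by have := p.2; omega) ∘ₗ
          collapseR act f p.1.1 ∘ₗ tcast act rfl h)
    else 0

/-- The augmentation `(P ⊗_A P)_0 → A ⊗_A A ≅ A`, `x ⊗ y ↦ μ(x)·μ(y)`,
induced by the augmentation `μ : P 0 → A`. -/
def muCollapse (act : Bimod (k := k) A P) (μ : P 0 →ₗ[k] A) :
    DTarget act 0 →ₗ[k] A :=
  DirectSum.toModule k (DiagIdx 0) A fun p =>
    if h : p.1.1 = 0 then
      liftQOr0 _ (TensorProduct.lift ((((LinearMap.mul k A) ∘ₗ μ).compl₂ μ))) ∘ₗ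
        tcast act h (show p.1.2 = 0 by have := p.2; omega)
    else 0

/-- Left action of `A` on `(P ⊗_A P)_i` (componentwise, through the leftmost factor). -/
def actLDT (act : Bimod (k := k) A P) (i : ℤ) (a : A) :
    DTarget act i →ₗ[k] DTarget act i :=
  DFinsupp.mapRange.linearMap (fun p : DiagIdx i => actLTensA act p.1.1 p.1.2 a)

/-- Right action of `A` on `(P ⊗_A P)_i` (componentwise, through the rightmost factor). -/
def actRDT (act : Bimod (k := k) A P) (i : ℤ) (b : Aᵐᵒᵖ) :
    DTarget act i →ₗ[k] DTarget act i :=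
  DFinsupp.mapRange.linearMap (fun p : DiagIdx i => actRTensA act p.1.1 p.1.2 b)

/-! ### Resolutions and diagonal maps -/

/-- The data `(P, d, μ)` is a nonnegatively graded projective resolution of `A`
by `A`-bimodules (`A^e`-modules). -/
structure IsResolution (act : Bimod (k := k) A P)
    (d : ∀ i, P i →ₗ[k] P (i - 1)) (μ : P 0 →ₗ[k] A) : Prop where
  /-- the actions commute, i.e. each `P i` is an `A`-bimodule -/
  actComm : act.IsCommuting
  /-- the differential is a map of bimodules -/
  dBimap : ∀ i, IsBimap act (d i)
  /-- the augmentation is a map of bimodules -/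
  μBimap : IsBimapToAlg act μ
  /-- `P` is a complex -/
  dd : ∀ i, d (i - 1) ∘ₗ d i = 0
  /-- `P` vanishes in negative degrees -/
  zero_neg : ∀ i, i < 0 → Subsingleton (P i)
  /-- the augmented complex is exact in positive degrees -/
  exact_pos : ∀ i, 1 ≤ i →
    LinearMap.range (pcast (show i + 1 - 1 = i by omega) ∘ₗ d (i + 1)) = LinearMap.ker (d i)
  /-- `μ ∘ d₁ = 0` and exactness at degree `0` -/
  exact_zero : LinearMap.range (d 1) = LinearMap.ker μ
  /-- `μ` is surjective -/
  surj : Function.Surjective μ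
  /-- each `P i` is projective as an `A^e`-module -/
  proj : ∀ i, letI := envModule act actComm i; Module.Projective (A ⊗[k] Aᵐᵒᵖ) (P i)

/-- `Δ : P → P ⊗_A P` is a chain map of complexes of bimodules lifting the
identity map of `A` (i.e. compatible with the augmentations). -/
structure IsDiagonal (act : Bimod (k := k) A P) (d : ∀ i, P i →ₗ[k] P (i - 1))
    (μ : P 0 →ₗ[k] A) (Δ : ∀ i, P i →ₗ[k] DTarget act i) : Prop where
  /-- `Δ` is a map of bimodules in each degree -/
  bimapL : ∀ (i : ℤ) (a : A), Δ i ∘ₗ act.actL i a = actLDT act i a ∘ₗ Δ i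
  bimapR : ∀ (i : ℤ) (b : Aᵐᵒᵖ), Δ i ∘ₗ act.actR i b = actRDT act i b ∘ₗ Δ i
  /-- `Δ` is a chain map -/
  chain : ∀ i, dDT act d i ∘ₗ Δ i = Δ (i - 1) ∘ₗ d i
  /-- `Δ` lifts the identity map of `A`, i.e. it is compatible with the augmentations
  under the identification `A ⊗_A A ≅ A` -/
  counit : ∀ z : P 0, muCollapse act μ (Δ 0 z) = μ z

/-- `f : P m → A` is a cocycle: `f ∘ d = 0`. -/
def IsCocycle {m : ℤ} (d : ∀ i, P i →ₗ[k] P (i - 1)) (f : P m →ₗ[k] A) : Prop :=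
  f ∘ₗ pcast (show m + 1 - 1 = m by omega) ∘ₗ d (m + 1) = 0

/-- Volkov's homotopy-lifting condition for a cocycle `f : P m → A` with respect to a
diagonal map `Δ`:  `ψ` is a family of bimodule maps `P i → P_{i-m+1}` with
`d ∘ ψ − (−1)^{m−1} ψ ∘ d = (f ⊗ 1 − 1 ⊗ f) ∘ Δ`, and `μ ∘ ψ − (−1)^{m−1} f ∘ ψ_P`
is a coboundary for some bimodule homotopy `ψ_P` with
`d ∘ ψ_P + ψ_P ∘ d = (μ ⊗ 1 − 1 ⊗ μ) ∘ Δ`. -/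
def IsHomotopyLifting (act : Bimod (k := k) A P) (d : ∀ i, P i →ₗ[k] P (i - 1))
    (μ : P 0 →ₗ[k] A) (Δ : ∀ i, P i →ₗ[k] DTarget act i)
    {m : ℤ} (f : P m →ₗ[k] A) (ψ : ∀ i, P i →ₗ[k] P (i - m + 1)) : Prop :=
  (∀ i, IsBimap act (ψ i)) ∧
  (∀ i, pcast (show i - m + 1 - 1 = i - m by omega) ∘ₗ d (i - m + 1) ∘ₗ ψ i
      - ((m - 1).negOnePow : ℤ) •
          (pcast (show i - 1 - m + 1 = i - m by omega) ∘ₗ ψ (i - 1) ∘ₗ d i)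
    = fTensorOne act f i ∘ₗ Δ i - oneTensorF act f i ∘ₗ Δ i) ∧
  (∃ ψP : ∀ i, P i →ₗ[k] P (i + 1),
    (∀ i, IsBimap act (ψP i)) ∧
    (∀ i, pcast (show i + 1 - 1 = i by omega) ∘ₗ d (i + 1) ∘ₗ ψP i
        + pcast (show i - 1 + 1 = i by omega) ∘ₗ ψP (i - 1) ∘ₗ d i
      = pcast (show i - 0 = i by omega) ∘ₗ (fTensorOne act μ i ∘ₗ Δ i - oneTensorF act μ i ∘ₗ Δ i)) ∧
    (∃ γ : P (m - 2) →ₗ[k] A, IsBimapToAlg act γ ∧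
      μ ∘ₗ pcast (show m - 1 - m + 1 = 0 by omega) ∘ₗ ψ (m - 1)
        - ((m - 1).negOnePow : ℤ) • (f ∘ₗ pcast (show m - 1 + 1 = m by omega) ∘ₗ ψP (m - 1))
      = γ ∘ₗ pcast (show m - 1 - 1 = m - 2 by omega) ∘ₗ d (m - 1)))

/-! ### The total tensor product complex `P ⊗ₖ Q` over the algebra `A ⊗ₖ B` -/

section Product

variable {B : Type u} [Ring B] [Algebra k B]
variable {Q : ℤ → Type u} [∀ i, AddCommGroup (Q i)] [∀ i, Module k (Q i)]

/-- The degree-`r` component `(P ⊗ Q)_r = ⨁_{i+j=r} P i ⊗ₖ Q j` of the total complex. -/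
abbrev PQmod (k : Type u) [Field k] (P Q : ℤ → Type u)
    [∀ i, AddCommGroup (P i)] [∀ i, Module k (P i)]
    [∀ i, AddCommGroup (Q i)] [∀ i, Module k (Q i)] (r : ℤ) : Type u :=
  ⨁ (p : DiagIdx r), P p.1.1 ⊗[k] Q p.1.2

instance (k : Type u) [Field k] (P Q : ℤ → Type u)
    [∀ i, AddCommGroup (P i)] [∀ i, Module k (P i)]
    [∀ i, AddCommGroup (Q i)] [∀ i, Module k (Q i)] (r : ℤ) :
    AddCommGroup (PQmod k P Q r) :=
  inferInstanceAs (AddCommGroup (⨁ (p : DiagIdx r), P p.1.1 ⊗[k] Q p.1.2))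

instance (k : Type u) [Field k] (P Q : ℤ → Type u)
    [∀ i, AddCommGroup (P i)] [∀ i, Module k (P i)]
    [∀ i, AddCommGroup (Q i)] [∀ i, Module k (Q i)] (r : ℤ) :
    Module k (PQmod k P Q r) :=
  inferInstanceAs (Module k (⨁ (p : DiagIdx r), P p.1.1 ⊗[k] Q p.1.2))

/-- Inclusion of the `(i,j)` component into `(P ⊗ Q)_r`. -/
def inclPQ {r : ℤ} (p : DiagIdx r) : (P p.1.1 ⊗[k] Q p.1.2) →ₗ[k] PQmod k P Q r :=
  DirectSum.lof k (DiagIdx r) (fun q : DiagIdx r => P q.1.1 ⊗[k] Q q.1.2) p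

/-- A family of algebra actions on the members of a family of modules gives an
algebra action on their direct sum, componentwise. -/
def compwiseEnd {ι : Type} [DecidableEq ι] (M : ι → Type u)
    [∀ p, AddCommGroup (M p)] [∀ p, Module k (M p)]
    (C : Type u) [Ring C] [Algebra k C] (φ : ∀ p, C →ₐ[k] Module.End k (M p)) :
    C →ₐ[k] Module.End k (⨁ p, M p) where
  toFun c := DirectSum.toModule k ι (⨁ p, M p) (fun p => DirectSum.lof k ι M p ∘ₗ φ p c)
  map_one' := by
    refine DirectSum.linearMap_ext k fun p => ?_
    ext x
    simp [DirectSum.toModule_lof]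
  map_mul' c c' := by
    refine DirectSum.linearMap_ext k fun p => ?_
    ext x
    simp [DirectSum.toModule_lof, Module.End.mul_apply]
  map_zero' := by
    refine DirectSum.linearMap_ext k fun p => ?_
    ext x
    simp [DirectSum.toModule_lof]
  map_add' c c' := by
    refine DirectSum.linearMap_ext k fun p => ?_
    ext x
    simp [DirectSum.toModule_lof, map_add]
  commutes' r := by
    refine DirectSum.linearMap_ext k fun p => ?_
    ext x
    simp [DirectSum.toModule_lof, AlgHom.commutes, Module.algebraMap_end_apply]

/-- The left action of `A` on the component `P i ⊗ₖ Q j` (through the `P` factor). -/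
def endTensL (actP : Bimod (k := k) A P) (i j : ℤ) :
    A →ₐ[k] Module.End k (P i ⊗[k] Q j) :=
  (Module.endTensorEndAlgHom (R := k) (S := k) (A := k) (M := P i) (N := Q j)).comp
    (Algebra.TensorProduct.includeLeft.comp (actP.actL i))

/-- The right action of `A` on the component `P i ⊗ₖ Q j` (through the `P` factor). -/
def endTensLop (actP : Bimod (k := k) A P) (i j : ℤ) :
    Aᵐᵒᵖ →ₐ[k] Module.End k (P i ⊗[k] Q j) :=
  (Module.endTensorEndAlgHom (R := k) (S := k) (A := k) (M := P i) (N := Q j)).comp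
    (Algebra.TensorProduct.includeLeft.comp (actP.actR i))

/-- The left action of `B` on the component `P i ⊗ₖ Q j` (through the `Q` factor). -/
def endTensR (actQ : Bimod (k := k) B Q) (i j : ℤ) :
    B →ₐ[k] Module.End k (P i ⊗[k] Q j) :=
  (Module.endTensorEndAlgHom (R := k) (S := k) (A := k) (M := P i) (N := Q j)).comp
    (Algebra.TensorProduct.includeRight.comp (actQ.actL j))

/-- The right action of `B` on the component `P i ⊗ₖ Q j` (through the `Q` factor). -/
def endTensRop (actQ : Bimod (k := k) B Q) (i j : ℤ) :
    Bᵐᵒᵖ →ₐ[k] Module.End k (P i ⊗[k] Q j) :=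
  (Module.endTensorEndAlgHom (R := k) (S := k) (A := k) (M := P i) (N := Q j)).comp
    (Algebra.TensorProduct.includeRight.comp (actQ.actR j))

/-- The left action of `A ⊗ₖ B` on `(P ⊗ Q)_r`:
`(a⊗b)·(p⊗q) = (a·p)⊗(b·q)` componentwise. -/
def prodActL (actP : Bimod (k := k) A P) (actQ : Bimod (k := k) B Q) (r : ℤ) :
    (A ⊗[k] B) →ₐ[k] Module.End k (PQmod k P Q r) :=
  Algebra.TensorProduct.lift
    (compwiseEnd _ _ (fun p : DiagIdx r => endTensL actP p.1.1 p.1.2))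
    (compwiseEnd _ _ (fun p : DiagIdx r => endTensR actQ p.1.1 p.1.2))
    (fun a b => by
      show _ * _ = _ * _
      refine DirectSum.linearMap_ext k fun p => ?_
      refine TensorProduct.ext' fun x y => ?_
      simp [compwiseEnd, DirectSum.toModule_lof, Module.End.mul_apply,
        endTensL, endTensR, Module.endTensorEndAlgHom_apply])

/-- The right action of `A ⊗ₖ B` on `(P ⊗ Q)_r`:
`(p⊗q)·(a'⊗b') = (p·a')⊗(q·b')` componentwise. -/
def prodActR (actP : Bimod (k := k) A P) (actQ : Bimod (k := k) B Q) (r : ℤ) :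
    (A ⊗[k] B)ᵐᵒᵖ →ₐ[k] Module.End k (PQmod k P Q r) :=
  (Algebra.TensorProduct.lift
    (compwiseEnd _ _ (fun p : DiagIdx r => endTensLop actP p.1.1 p.1.2))
    (compwiseEnd _ _ (fun p : DiagIdx r => endTensRop actQ p.1.1 p.1.2))
    (fun a b => by
      show _ * _ = _ * _
      refine DirectSum.linearMap_ext k fun p => ?_
      refine TensorProduct.ext' fun x y => ?_
      simp [compwiseEnd, DirectSum.toModule_lof, Module.End.mul_apply,
        endTensLop, endTensRop, Module.endTensorEndAlgHom_apply])).comp (Algebra.TensorProduct.opAlgEquiv k k A B).symm.toAlgHom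

/-- The `(A ⊗ₖ B)`-bimodule structure
`(a⊗b)(p⊗q)(a'⊗b') = (a·p·a') ⊗ (b·q·b')` on the components of `P ⊗ Q`. -/
def prodBimod (actP : Bimod (k := k) A P) (actQ : Bimod (k := k) B Q) :
    Bimod (k := k) (A ⊗[k] B) (PQmod k P Q) where
  actL := prodActL actP actQ
  actR := prodActR actP actQ

/-- The Koszul-signed total differential `d(p⊗q) = d(p)⊗q + (−1)^{|p|} p⊗d(q)`
on `P ⊗ Q`. -/
def prodD (dP : ∀ i, P i →ₗ[k] P (i - 1)) (dQ : ∀ i, Q i →ₗ[k] Q (i - 1)) (r : ℤ) :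
    PQmod k P Q r →ₗ[k] PQmod k P Q (r - 1) :=
  DirectSum.toModule k (DiagIdx r) (PQmod k P Q (r - 1)) fun p =>
    inclPQ (⟨(p.1.1 - 1, p.1.2), by have := p.2; omega⟩ : DiagIdx (r - 1)) ∘ₗ
        LinearMap.rTensor (Q p.1.2) (dP p.1.1)
      + (p.1.1.negOnePow : ℤ) •
        (inclPQ (⟨(p.1.1, p.1.2 - 1), by have := p.2; omega⟩ : DiagIdx (r - 1)) ∘ₗ
          LinearMap.lTensor (P p.1.1) (dQ p.1.2))

/-- The augmentation `μ_{P⊗Q} = μ_P ⊗ μ_Q : (P ⊗ Q)_0 → A ⊗ₖ B`. -/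
def prodMu (μP : P 0 →ₗ[k] A) (μQ : Q 0 →ₗ[k] B) :
    PQmod k P Q 0 →ₗ[k] A ⊗[k] B :=
  DirectSum.toModule k (DiagIdx 0) (A ⊗[k] B) fun p =>
    if h : p.1.1 = 0 then
      TensorProduct.map μP μQ ∘ₗ
        TensorProduct.map (pcast h) (pcast (show p.1.2 = 0 by have := p.2; omega))
    else 0

/-- The cochain `f ⊗ g : (P⊗Q)_{m+n} → A ⊗ₖ B`, vanishing on the components
`P_i ⊗ Q_j` with `(i,j) ≠ (m,n)` and sending `x ⊗ y ↦ (−1)^{mn} f(x) ⊗ g(y)`. -/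
def cupTensor {m n : ℤ} (f : P m →ₗ[k] A) (g : Q n →ₗ[k] B) :
    PQmod k P Q (m + n) →ₗ[k] A ⊗[k] B :=
  DirectSum.toModule k (DiagIdx (m + n)) (A ⊗[k] B) fun p =>
    if h : p.1.1 = m ∧ p.1.2 = n then
      ((m * n).negOnePow : ℤ) •
        (TensorProduct.map f g ∘ₗ TensorProduct.map (pcast h.1) (pcast h.2))
    else 0

end Product

section Product2

variable {B : Type u} [Ring B] [Algebra k B]
variable {Q : ℤ → Type u} [∀ i, AddCommGroup (Q i)] [∀ i, Module k (Q i)]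

/-- The component of the map
`σ⁻¹ : (P ⊗_A P) ⊗ₖ (Q ⊗_B Q) → (P ⊗ᵗ Q) ⊗_{A⊗B} (P ⊗ᵗ Q)`,
`(x⊗x') ⊗ (y⊗y') ↦ (−1)^{u·l} (x⊗y) ⊗ (x'⊗y')` for `x ∈ P j`, `x' ∈ P u`,
`y ∈ Q l`, `y' ∈ Q v`. -/
def sigmaInv (actP : Bimod (k := k) A P) (actQ : Bimod (k := k) B Q)
    (j u l v : ℤ) :
    (TensA actP j u ⊗[k] TensA actQ l v) →ₗ[k]
      TensA (prodBimod actP actQ) (j + l) (u + v) :=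
  letI base : ((P j ⊗[k] P u) ⊗[k] (Q l ⊗[k] Q v)) →ₗ[k]
      TensA (prodBimod actP actQ) (j + l) (u + v) :=
    ((u * l).negOnePow : ℤ) •
      ((bal (prodBimod actP actQ) (j + l) (u + v)).mkQ ∘ₗ
        TensorProduct.map
          (inclPQ (⟨(j, l), rfl⟩ : DiagIdx (j + l)))
          (inclPQ (⟨(u, v), rfl⟩ : DiagIdx (u + v))) ∘ₗ
        (TensorProduct.tensorTensorTensorComm k (P j) (P u) (Q l) (Q v)).toLinearMap)
  TensorProduct.lift
    (liftQOr0 (bal actQ l v) (liftQOr0 (bal actP j u) (TensorProduct.curry base)).flip).flip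

/-- The degree-`r` component of the tensor product of complexes
`(P ⊗_A P) ⊗ₖ (Q ⊗_B Q)`. -/
abbrev TensTens (actP : Bimod (k := k) A P) (actQ : Bimod (k := k) B Q) (r : ℤ) : Type u :=
  PQmod k (DTarget actP) (DTarget actQ) r

/-- The total map `σ⁻¹ : (P ⊗_A P) ⊗ₖ (Q ⊗_B Q) → (P ⊗ Q) ⊗_{A⊗B} (P ⊗ Q)` in degree `r`. -/
def sigmaInvTot (actP : Bimod (k := k) A P) (actQ : Bimod (k := k) B Q) (r : ℤ) :
    TensTens actP actQ r →ₗ[k] DTarget (prodBimod actP actQ) r :=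
  DirectSum.toModule k (DiagIdx r) _ fun w =>
    (DirectSum.toModule k _ _ fun ce : DiagIdx w.1.1 × DiagIdx w.1.2 =>
      inclDT (prodBimod actP actQ)
          (⟨(ce.1.1.1 + ce.2.1.1, ce.1.1.2 + ce.2.1.2), by
            have h1 := ce.1.2; have h2 := ce.2.2; have h3 := w.2; omega⟩ : DiagIdx r) ∘ₗ
        sigmaInv actP actQ ce.1.1.1 ce.1.1.2 ce.2.1.1 ce.2.1.2) ∘ₗ
    (TensorProduct.directSum k k
      (fun c : DiagIdx w.1.1 => TensA actP c.1.1 c.1.2)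
      (fun e : DiagIdx w.1.2 => TensA actQ e.1.1 e.1.2)).toLinearMap

/-- The map `Δ_P ⊗ Δ_Q : P ⊗ Q → (P ⊗_A P) ⊗ₖ (Q ⊗_B Q)` in degree `i`. -/
def deltaTensor (actP : Bimod (k := k) A P) (actQ : Bimod (k := k) B Q)
    (ΔP : ∀ i, P i →ₗ[k] DTarget actP i) (ΔQ : ∀ i, Q i →ₗ[k] DTarget actQ i) (i : ℤ) :
    PQmod k P Q i →ₗ[k] TensTens actP actQ i :=
  DirectSum.toModule k (DiagIdx i) _ fun p =>
    inclPQ (P := DTarget actP) (Q := DTarget actQ) p ∘ₗ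
      TensorProduct.map (ΔP p.1.1) (ΔQ p.1.2)

/-- The diagonal map `Δ_{P⊗Q} := σ⁻¹ ∘ (Δ_P ⊗ Δ_Q)` for the total complex `P ⊗ Q`. -/
def prodDelta (actP : Bimod (k := k) A P) (actQ : Bimod (k := k) B Q)
    (ΔP : ∀ i, P i →ₗ[k] DTarget actP i) (ΔQ : ∀ i, Q i →ₗ[k] DTarget actQ i) (i : ℤ) :
    PQmod k P Q i →ₗ[k] DTarget (prodBimod actP actQ) i :=
  sigmaInvTot actP actQ i ∘ₗ deltaTensor actP actQ ΔP ΔQ i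

/-- `ψ_{f⊗g} := ψ_f ⊗ (1⊗g)Δ_Q + (−1)^m (f⊗1)Δ_P ⊗ ψ_g` (with Koszul signs). -/
def psiCup (actP : Bimod (k := k) A P) (actQ : Bimod (k := k) B Q)
    (ΔP : ∀ i, P i →ₗ[k] DTarget actP i) (ΔQ : ∀ i, Q i →ₗ[k] DTarget actQ i)
    {m n : ℤ} (f : P m →ₗ[k] A) (g : Q n →ₗ[k] B)
    (ψf : ∀ i, P i →ₗ[k] P (i - m + 1)) (ψg : ∀ i, Q i →ₗ[k] Q (i - n + 1)) (r : ℤ) :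
    PQmod k P Q r →ₗ[k] PQmod k P Q (r - (m + n) + 1) :=
  DirectSum.toModule k (DiagIdx r) (PQmod k P Q (r - (m + n) + 1)) fun p =>
    ((n * p.1.1).negOnePow : ℤ) •
      (inclPQ (⟨(p.1.1 - m + 1, p.1.2 - n), by
          have := p.2; omega⟩ : DiagIdx (r - (m + n) + 1)) ∘ₗ
        TensorProduct.map (ψf p.1.1) (oneTensorF actQ g p.1.2 ∘ₗ ΔQ p.1.2))
    + ((m.negOnePow : ℤ) * (((n - 1) * p.1.1).negOnePow : ℤ)) •
      (inclPQ (⟨(p.1.1 - m, p.1.2 - n + 1), by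
          have := p.2; omega⟩ : DiagIdx (r - (m + n) + 1)) ∘ₗ
        TensorProduct.map (fTensorOne actP f p.1.1 ∘ₗ ΔP p.1.1) (ψg p.1.2))

/-- `ψ_{P⊗Q} := ψ_P ⊗ (μ_Q⊗1)Δ_Q + (1⊗μ_P)Δ_P ⊗ ψ_Q` (with Koszul signs). -/
def psiProd (actP : Bimod (k := k) A P) (actQ : Bimod (k := k) B Q)
    (ΔP : ∀ i, P i →ₗ[k] DTarget actP i) (ΔQ : ∀ i, Q i →ₗ[k] DTarget actQ i)
    (μP : P 0 →ₗ[k] A) (μQ : Q 0 →ₗ[k] B)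
    (ψP : ∀ i, P i →ₗ[k] P (i + 1)) (ψQ : ∀ i, Q i →ₗ[k] Q (i + 1)) (r : ℤ) :
    PQmod k P Q r →ₗ[k] PQmod k P Q (r + 1) :=
  DirectSum.toModule k (DiagIdx r) (PQmod k P Q (r + 1)) fun p =>
    (inclPQ (⟨(p.1.1 + 1, p.1.2), by have := p.2; omega⟩ : DiagIdx (r + 1)) ∘ₗ
      TensorProduct.map (ψP p.1.1)
        (pcast (show p.1.2 - 0 = p.1.2 by omega) ∘ₗ fTensorOne actQ μQ p.1.2 ∘ₗ ΔQ p.1.2))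
    + (p.1.1.negOnePow : ℤ) •
      (inclPQ (⟨(p.1.1, p.1.2 + 1), by have := p.2; omega⟩ : DiagIdx (r + 1)) ∘ₗ
        TensorProduct.map
          (pcast (show p.1.1 - 0 = p.1.1 by omega) ∘ₗ oneTensorF actP μP p.1.1 ∘ₗ ΔP p.1.1)
          (ψQ p.1.2))

/-- The cup product `(g ⊗ g') ∘ Δ`-collapse: the cochain `(P⊗_A P)_{n+n'} → A`
given on the `(n,n')` component by `x ⊗ y ↦ (−1)^{n'n} g(x)·g'(y)`. -/
def cupDT (act : Bimod (k := k) A P) {n n' : ℤ} (g : P n →ₗ[k] A) (g' : P n' →ₗ[k] A) :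
    DTarget act (n + n') →ₗ[k] A :=
  DirectSum.toModule k (DiagIdx (n + n')) A fun p =>
    if h : p.1.1 = n ∧ p.1.2 = n' then
      ((n' * n).negOnePow : ℤ) •
        (liftQOr0 _ (TensorProduct.lift (((LinearMap.mul k A) ∘ₗ g).compl₂ g')) ∘ₗ
          tcast act h.1 h.2)
    else 0

end Product2

section Product3

variable {B : Type u} [Ring B] [Algebra k B]
variable {Q : ℤ → Type u} [∀ i, AddCommGroup (Q i)] [∀ i, Module k (Q i)]

/-- Component of the Grimley–Nguyen–Witherspoon map `σ`:
`(x⊗y) ⊗ (x'⊗y') ↦ (−1)^{ju} (x⊗x') ⊗ (y⊗y')` on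
`(P_i ⊗ Q_j) ⊗ (P_u ⊗ Q_v)`. -/
def sigmaFwdComp (actP : Bimod (k := k) A P) (actQ : Bimod (k := k) B Q)
    {s t r : ℤ} (hst : s + t = r) (ce : DiagIdx s × DiagIdx t) :
    ((P ce.1.1.1 ⊗[k] Q ce.1.1.2) ⊗[k] (P ce.2.1.1 ⊗[k] Q ce.2.1.2)) →ₗ[k]
      TensTens actP actQ r :=
  ((ce.1.1.2 * ce.2.1.1).negOnePow : ℤ) •
    (inclPQ (P := DTarget actP) (Q := DTarget actQ)
        (⟨(ce.1.1.1 + ce.2.1.1, ce.1.1.2 + ce.2.1.2), by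
          have h1 := ce.1.2; have h2 := ce.2.2; omega⟩ : DiagIdx r) ∘ₗ
      TensorProduct.map
        (inclDT actP (⟨(ce.1.1.1, ce.2.1.1), rfl⟩ : DiagIdx (ce.1.1.1 + ce.2.1.1)) ∘ₗ
          (bal actP ce.1.1.1 ce.2.1.1).mkQ)
        (inclDT actQ (⟨(ce.1.1.2, ce.2.1.2), rfl⟩ : DiagIdx (ce.1.1.2 + ce.2.1.2)) ∘ₗ
          (bal actQ ce.1.1.2 ce.2.1.2).mkQ) ∘ₗ
      (TensorProduct.tensorTensorTensorComm k
        (P ce.1.1.1) (Q ce.1.1.2) (P ce.2.1.1) (Q ce.2.1.2)).toLinearMap)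

/-- The map `σ` before descending to the balanced tensor product. -/
def sigmaFwdPre (actP : Bimod (k := k) A P) (actQ : Bimod (k := k) B Q)
    {s t r : ℤ} (hst : s + t = r) :
    (PQmod k P Q s ⊗[k] PQmod k P Q t) →ₗ[k] TensTens actP actQ r :=
  (DirectSum.toModule k (DiagIdx s × DiagIdx t) (TensTens actP actQ r)
      (fun ce => sigmaFwdComp actP actQ hst ce)) ∘ₗ
    (TensorProduct.directSum k k
      (fun c : DiagIdx s => P c.1.1 ⊗[k] Q c.1.2)
      (fun e : DiagIdx t => P e.1.1 ⊗[k] Q e.1.2)).toLinearMap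

/-- The Grimley–Nguyen–Witherspoon map
`σ : (P ⊗ Q) ⊗_{A⊗B} (P ⊗ Q) → (P ⊗_A P) ⊗ₖ (Q ⊗_B Q)`, given on the component
`(P_i ⊗ Q_j) ⊗_{A⊗B} (P_u ⊗ Q_v)` by
`(x⊗y) ⊗ (x'⊗y') ↦ (−1)^{ju} (x⊗x') ⊗ (y⊗y')`. -/
def sigmaFwdAt (actP : Bimod (k := k) A P) (actQ : Bimod (k := k) B Q)
    {s t r : ℤ} (hst : s + t = r) :
    TensA (prodBimod actP actQ) s t →ₗ[k] TensTens actP actQ r :=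
  liftQOr0 (bal (prodBimod actP actQ) s t) (sigmaFwdPre actP actQ hst)

/-- The total map `σ` in degree `r`. -/
def sigmaFwd (actP : Bimod (k := k) A P) (actQ : Bimod (k := k) B Q) (r : ℤ) :
    DTarget (prodBimod actP actQ) r →ₗ[k] TensTens actP actQ r :=
  DirectSum.toModule k (DiagIdx r) (TensTens actP actQ r) fun st =>
    sigmaFwdAt actP actQ st.2

/-- Left action of the pure tensor `a ⊗ b ∈ A ⊗ₖ B` on `(P ⊗_A P) ⊗ₖ (Q ⊗_B Q)`. -/
def actLTensTens (actP : Bimod (k := k) A P) (actQ : Bimod (k := k) B Q) (r : ℤ)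
    (a : A) (b : B) : TensTens actP actQ r →ₗ[k] TensTens actP actQ r :=
  DFinsupp.mapRange.linearMap
    (fun w : DiagIdx r => TensorProduct.map (actLDT actP w.1.1 a) (actLDT actQ w.1.2 b))

/-- Right action of the pure tensor `a ⊗ b ∈ A ⊗ₖ B` on `(P ⊗_A P) ⊗ₖ (Q ⊗_B Q)`. -/
def actRTensTens (actP : Bimod (k := k) A P) (actQ : Bimod (k := k) B Q) (r : ℤ)
    (a : A) (b : B) : TensTens actP actQ r →ₗ[k] TensTens actP actQ r :=
  DFinsupp.mapRange.linearMap
    (fun w : DiagIdx r => TensorProduct.map (actRDT actP w.1.1 (op a)) (actRDT actQ w.1.2 (op b)))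

end Product3

/-! ### The concrete example: the truncated polynomial ring `k[x]/(x²)` -/

section Concrete

open Polynomial

/-- The truncated polynomial ring `A = k[x]/(x²)`. -/
abbrev TP (k : Type u) [Field k] : Type u :=
  Polynomial k ⧸ Ideal.span ({Polynomial.X ^ 2} : Set (Polynomial k))

/-- The generator `x` of `k[x]/(x²)`. -/
def xGen (k : Type u) [Field k] : TP k := Ideal.Quotient.mk _ Polynomial.X

/-- `R = A ⊗ₖ A`, the enveloping algebra of the commutative algebra `A`. -/
abbrev RA (k : Type u) [Field k] : Type u := TP k ⊗[k] TP k

instance : CommRing (RA k) := inferInstance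
instance : Module (RA k) (RA k) := Semiring.toModule

/-- `u = x⊗1 − 1⊗x`. -/
def uE (k : Type u) [Field k] : RA k := xGen k ⊗ₜ[k] 1 - 1 ⊗ₜ[k] xGen k

/-- `v = x⊗1 + 1⊗x`. -/
def vE (k : Type u) [Field k] : RA k := xGen k ⊗ₜ[k] 1 + 1 ⊗ₜ[k] xGen k

/-- The components of the 2-periodic resolution: `P i = R` for `i ≥ 0` and `0`
(the trivial module) for `i < 0`. -/
def PC (k : Type u) [Field k] : ℤ → Type u
  | .ofNat _ => RA k
  | .negSucc _ => PUnit

instance : ∀ i, AddCommGroup (PC k i)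
  | .ofNat _ => inferInstanceAs (AddCommGroup (RA k))
  | .negSucc _ => inferInstanceAs (AddCommGroup PUnit.{u+1})

instance : ∀ i, Module k (PC k i)
  | .ofNat _ => inferInstanceAs (Module k (RA k))
  | .negSucc _ => inferInstanceAs (Module k PUnit.{u+1})

/-- Identification of the nonnegative components with `R`. -/
def toR (k : Type u) [Field k] : ∀ (i : ℤ), 0 ≤ i → (PC k i ≃ₗ[k] RA k)
  | .ofNat _, _ => LinearEquiv.refl k (RA k)
  | .negSucc n, h => absurd h (Int.negSucc_lt_zero n).not_ge

/-- The free generator `e_i = 1 ⊗ 1` of `P i` (`e_i = 0` for `i < 0`). -/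
def eB (k : Type u) [Field k] : ∀ i : ℤ, PC k i
  | .ofNat _ => (1 : RA k)
  | .negSucc _ => PUnit.unit

/-- Left multiplication of `R` on itself, as an algebra map into endomorphisms. -/
def mulHom (k : Type u) [Field k] : RA k →ₐ[k] Module.End k (RA k) :=
  Algebra.lsmul k k (RA k)

/-- `unop` as an algebra map, for the commutative algebra `A`. -/
def unopAlg (k : Type u) [Field k] : (TP k)ᵐᵒᵖ →ₐ[k] TP k where
  toFun := unop
  map_one' := rfl
  map_mul' z w := by simp [mul_comm]
  map_zero' := rfl
  map_add' _ _ := rfl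
  commutes' _ := rfl

/-- The unique algebra action on the trivial module. -/
def trivAct.{w} (k : Type u) [Field k] (C : Type u) [Ring C] [Algebra k C] :
    C →ₐ[k] Module.End k PUnit.{w+1} where
  toFun _ := 1
  map_one' := rfl
  map_mul' _ _ := Subsingleton.elim _ _
  map_zero' := Subsingleton.elim _ _
  map_add' _ _ := Subsingleton.elim _ _
  commutes' _ := Subsingleton.elim _ _

/-- The `A`-bimodule structure on the resolution `P`: in nonnegative degrees,
`a` acts on the left by multiplication by `a⊗1` and on the right by
multiplication by `1⊗a`. -/
def actC (k : Type u) [Field k] : Bimod (k := k) (TP k) (PC k) where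
  actL
    | .ofNat _n => (mulHom k).comp (Algebra.TensorProduct.includeLeft (S := k))
    | .negSucc _n => trivAct k (TP k)
  actR
    | .ofNat _n => ((mulHom k).comp Algebra.TensorProduct.includeRight).comp (unopAlg k)
    | .negSucc _n => trivAct k (TP k)ᵐᵒᵖ

/-- The differential of the resolution `P`: multiplication by `u` in odd degrees
and by `v` in even positive degrees. -/
def dC (k : Type u) [Field k] (i : ℤ) : PC k i →ₗ[k] PC k (i - 1) :=
  letI := Classical.dec (1 ≤ i)
  if h : 1 ≤ i then
    ((toR k (i - 1) (by omega)).symm.toLinearMap ∘ₗ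
      LinearMap.mulLeft k (if Odd i then uE k else vE k) ∘ₗ
      (toR k i (by omega)).toLinearMap)
  else 0

/-- The augmentation `μ : P 0 = A ⊗ A → A`, the multiplication map. -/
def muC (k : Type u) [Field k] : PC k 0 →ₗ[k] TP k :=
  LinearMap.mul' k (TP k) ∘ₗ (toR k 0 le_rfl).toLinearMap

end Concrete

/-! ### Auxiliary lemmas -/

section AuxGeneric

variable {A : Type u} [Ring A] [Algebra k A]
variable {P : ℤ → Type u} [∀ i, AddCommGroup (P i)] [∀ i, Module k (P i)]
variable (act : Bimod (k := k) A P)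

lemma pcast_eq_id {i : ℤ} (h : i = i) : pcast (k := k) (P := P) h = LinearMap.id := rfl

lemma tcast_eq_id {j l : ℤ} (h1 : j = j) (h2 : l = l) :
    tcast act h1 h2 = LinearMap.id := rfl

lemma pcast_actL {t t' : ℤ} (h : t = t') (a : A) (z : P t) :
    pcast (k := k) (P := P) h (act.actL t a z) = act.actL t' a (pcast (k := k) (P := P) h z) := by
  subst h; rfl

lemma pcast_actR {t t' : ℤ} (h : t = t') (b : Aᵐᵒᵖ) (z : P t) :
    pcast (k := k) (P := P) h (act.actR t b z) = act.actR t' b (pcast (k := k) (P := P) h z) := by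
  subst h; rfl

lemma tcast_tmulA {j j' l l' : ℤ} (h1 : j = j') (h2 : l = l') (x : P j) (y : P l) :
    tcast act h1 h2 (tmulA act x y) = tmulA act (pcast (k := k) (P := P) h1 x) (pcast (k := k) (P := P) h2 y) := by
  subst h1; subst h2; rfl

lemma tmulA_add_left {j l : ℤ} (x x' : P j) (y : P l) :
    tmulA act (x + x') y = tmulA act x y + tmulA act x' y := by
  simp [tmulA, TensorProduct.add_tmul, ← Submodule.Quotient.mk_add]

lemma tmulA_add_right {j l : ℤ} (x : P j) (y y' : P l) :
    tmulA act x (y + y') = tmulA act x y + tmulA act x y' := by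
  simp [tmulA, TensorProduct.tmul_add, ← Submodule.Quotient.mk_add]

lemma tmulA_zsmul_left {j l : ℤ} (c : ℤ) (x : P j) (y : P l) :
    tmulA act (c • x) y = c • tmulA act x y := by
  have h1 : (c • x) ⊗ₜ[k] y = c • (x ⊗ₜ[k] y) :=
    map_zsmul ((TensorProduct.mk k (P j) (P l)).flip y) c x
  rw [tmulA, tmulA, ← Submodule.mkQ_apply, ← Submodule.mkQ_apply, h1, map_zsmul]

lemma tmulA_zsmul_right {j l : ℤ} (c : ℤ) (x : P j) (y : P l) :
    tmulA act x (c • y) = c • tmulA act x y := by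
  have h1 : x ⊗ₜ[k] (c • y) = c • (x ⊗ₜ[k] y) :=
    map_zsmul (TensorProduct.mk k (P j) (P l) x) c y
  rw [tmulA, tmulA, ← Submodule.mkQ_apply, ← Submodule.mkQ_apply, h1, map_zsmul]

lemma tmulA_zero_left {j l : ℤ} (y : P l) : tmulA act (0 : P j) y = 0 := by
  rw [tmulA, TensorProduct.zero_tmul, Submodule.Quotient.mk_zero]

lemma tmulA_zero_right {j l : ℤ} (x : P j) : tmulA act x (0 : P l) = 0 := by
  rw [tmulA, TensorProduct.tmul_zero, Submodule.Quotient.mk_zero]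

lemma tmulA_balance {j l : ℤ} (a : A) (x : P j) (y : P l) :
    tmulA act (act.actR j (op a) x) y = tmulA act x (act.actL l a y) := by
  rw [tmulA, tmulA, Submodule.Quotient.eq]
  exact Submodule.subset_span ⟨a, x, y, rfl⟩

lemma tensA_ext {j l : ℤ} {M : Type u} [AddCommGroup M] [Module k M]
    {F G : TensA act j l →ₗ[k] M}
    (h : ∀ (x : P j) (y : P l), F (tmulA act x y) = G (tmulA act x y)) : F = G := by
  refine Submodule.linearMap_qext _ ?_
  exact TensorProduct.ext' h

lemma mapTensA_tmulA {j l j' l' : ℤ} (φ : P j →ₗ[k] P j') (ψ : P l →ₗ[k] P l')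
    (hφ : ∀ b, φ ∘ₗ act.actR j b = act.actR j' b ∘ₗ φ)
    (hψ : ∀ a, ψ ∘ₗ act.actL l a = act.actL l' a ∘ₗ ψ)
    (x : P j) (y : P l) :
    mapTensA act φ ψ (tmulA act x y) = tmulA act (φ x) (ψ y) := by
  have hcond : bal act j l ≤ (bal act j' l').comap (TensorProduct.map φ ψ) := by
    rw [bal, Submodule.span_le]
    rintro z ⟨a, x0, y0, rfl⟩
    simp only [SetLike.mem_coe, Submodule.mem_comap, map_sub, TensorProduct.map_tmul]
    have h1 : φ (act.actR j (op a) x0) = act.actR j' (op a) (φ x0) :=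
      LinearMap.congr_fun (hφ (op a)) x0
    have h2 : ψ (act.actL l a y0) = act.actL l' a (ψ y0) :=
      LinearMap.congr_fun (hψ a) y0
    rw [h1, h2]
    exact Submodule.subset_span ⟨a, φ x0, ψ y0, rfl⟩
  rw [mapTensA, mapQOr0]
  rw [dif_pos hcond]
  rw [tmulA, tmulA, Submodule.mapQ_apply, TensorProduct.map_tmul]

end AuxGeneric
section AuxDT

variable {A : Type u} [Ring A] [Algebra k A]
variable {P : ℤ → Type u} [∀ i, AddCommGroup (P i)] [∀ i, Module k (P i)]
variable (act : Bimod (k := k) A P)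

lemma inclDT_congr {r : ℤ} {p q : DiagIdx r} (h : p = q)
    (h1 : p.1.1 = q.1.1) (h2 : p.1.2 = q.1.2) (z : TensA act p.1.1 p.1.2) :
    inclDT act p z = inclDT act q (tcast act h1 h2 z) := by
  subst h; rfl

lemma actLDT_lof (i : ℤ) (p : DiagIdx i) (a : A) (z : TensA act p.1.1 p.1.2) :
    actLDT act i a (inclDT act p z) = inclDT act p (actLTensA act p.1.1 p.1.2 a z) := by
  change DFinsupp.mapRange (fun (q : DiagIdx i) (w : TensA act q.1.1 q.1.2) =>
      actLTensA act q.1.1 q.1.2 a w) (fun q => map_zero _) (DFinsupp.single p z)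
    = DFinsupp.single p (actLTensA act p.1.1 p.1.2 a z)
  exact DFinsupp.mapRange_single

lemma actRDT_lof (i : ℤ) (p : DiagIdx i) (b : Aᵐᵒᵖ) (z : TensA act p.1.1 p.1.2) :
    actRDT act i b (inclDT act p z) = inclDT act p (actRTensA act p.1.1 p.1.2 b z) := by
  change DFinsupp.mapRange (fun (q : DiagIdx i) (w : TensA act q.1.1 q.1.2) =>
      actRTensA act q.1.1 q.1.2 b w) (fun q => map_zero _) (DFinsupp.single p z)
    = DFinsupp.single p (actRTensA act p.1.1 p.1.2 b z)
  exact DFinsupp.mapRange_single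

lemma actLTensA_tmulA (hc : act.IsCommuting) {j l : ℤ} (a : A) (x : P j) (y : P l) :
    actLTensA act j l a (tmulA act x y) = tmulA act (act.actL j a x) y := by
  rw [actLTensA]
  rw [mapTensA_tmulA act _ _ (fun b => hc j a b) (fun a' => by rw [LinearMap.id_comp, LinearMap.comp_id])]
  rfl

lemma actRTensA_tmulA (hc : act.IsCommuting) {j l : ℤ} (b : Aᵐᵒᵖ) (x : P j) (y : P l) :
    actRTensA act j l b (tmulA act x y) = tmulA act x (act.actR l b y) := by
  rw [actRTensA]
  rw [mapTensA_tmulA act _ _ (fun b' => by rw [LinearMap.id_comp, LinearMap.comp_id])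
    (fun a' => (hc l a' b).symm)]
  rfl

lemma dDT_lof (d : ∀ i, P i →ₗ[k] P (i - 1)) (i : ℤ) (p : DiagIdx i)
    (z : TensA act p.1.1 p.1.2) :
    dDT act d i (inclDT act p z)
      = inclDT act (⟨(p.1.1 - 1, p.1.2), by have := p.2; omega⟩ : DiagIdx (i - 1))
          (mapTensA act (d p.1.1) LinearMap.id z)
        + (p.1.1.negOnePow : ℤ) •
          inclDT act (⟨(p.1.1, p.1.2 - 1), by have := p.2; omega⟩ : DiagIdx (i - 1))
            (mapTensA act LinearMap.id (d p.1.2) z) := by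
  rw [dDT, inclDT, DirectSum.toModule_lof]
  rfl

lemma dDT_actLDT (hc : act.IsCommuting) (d : ∀ i, P i →ₗ[k] P (i - 1))
    (hd : ∀ t, IsBimap act (d t)) (i : ℤ) (a : A) :
    dDT act d i ∘ₗ actLDT act i a = actLDT act (i - 1) a ∘ₗ dDT act d i := by
  refine DirectSum.linearMap_ext k fun p => ?_
  refine tensA_ext act fun x y => ?_
  simp only [LinearMap.comp_apply]
  have hlof : (DirectSum.lof k (DiagIdx i) (fun q : DiagIdx i => TensA act q.1.1 q.1.2) p)
      (tmulA act x y) = inclDT act p (tmulA act x y) := rfl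
  rw [hlof, actLDT_lof, actLTensA_tmulA act hc, dDT_lof, dDT_lof]
  rw [map_add, map_zsmul, actLDT_lof, actLDT_lof]
  rw [mapTensA_tmulA act _ _ (fun b => (hd p.1.1).2 b)
    (fun a' => by rw [LinearMap.id_comp, LinearMap.comp_id]),
    mapTensA_tmulA act _ _ (fun b => (hd p.1.1).2 b)
    (fun a' => by rw [LinearMap.id_comp, LinearMap.comp_id]),
    mapTensA_tmulA act _ _ (fun b => by rw [LinearMap.id_comp, LinearMap.comp_id])
    (fun a' => (hd p.1.2).1 a'),
    mapTensA_tmulA act _ _ (fun b => by rw [LinearMap.id_comp, LinearMap.comp_id])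
    (fun a' => (hd p.1.2).1 a')]
  rw [actLTensA_tmulA act hc, actLTensA_tmulA act hc]
  simp only [LinearMap.id_apply]
  have hx := LinearMap.congr_fun ((hd p.1.1).1 a) x
  simp only [LinearMap.comp_apply] at hx
  rw [hx]

lemma dDT_actRDT (hc : act.IsCommuting) (d : ∀ i, P i →ₗ[k] P (i - 1))
    (hd : ∀ t, IsBimap act (d t)) (i : ℤ) (b : Aᵐᵒᵖ) :
    dDT act d i ∘ₗ actRDT act i b = actRDT act (i - 1) b ∘ₗ dDT act d i := by
  refine DirectSum.linearMap_ext k fun p => ?_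
  refine tensA_ext act fun x y => ?_
  simp only [LinearMap.comp_apply]
  have hlof : (DirectSum.lof k (DiagIdx i) (fun q : DiagIdx i => TensA act q.1.1 q.1.2) p)
      (tmulA act x y) = inclDT act p (tmulA act x y) := rfl
  rw [hlof, actRDT_lof, actRTensA_tmulA act hc, dDT_lof, dDT_lof]
  rw [map_add, map_zsmul, actRDT_lof, actRDT_lof]
  rw [mapTensA_tmulA act _ _ (fun b' => (hd p.1.1).2 b')
    (fun a' => by rw [LinearMap.id_comp, LinearMap.comp_id]),
    mapTensA_tmulA act _ _ (fun b' => (hd p.1.1).2 b')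
    (fun a' => by rw [LinearMap.id_comp, LinearMap.comp_id]),
    mapTensA_tmulA act _ _ (fun b' => by rw [LinearMap.id_comp, LinearMap.comp_id])
    (fun a' => (hd p.1.2).1 a'),
    mapTensA_tmulA act _ _ (fun b' => by rw [LinearMap.id_comp, LinearMap.comp_id])
    (fun a' => (hd p.1.2).1 a')]
  rw [actRTensA_tmulA act hc, actRTensA_tmulA act hc]
  simp only [LinearMap.id_apply]
  have hy := LinearMap.congr_fun ((hd p.1.2).2 b) y
  simp only [LinearMap.comp_apply] at hy
  rw [hy]

end AuxDT
section AuxConcrete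

open Polynomial

variable (k)

lemma actC_comm : (actC k).IsCommuting := by
  intro i a b
  cases i with
  | ofNat n =>
    ext z
    exact mul_left_comm (a ⊗ₜ[k] (1 : TP k)) ((1 : TP k) ⊗ₜ[k] (unop b)) z
  | negSucc n => rfl

lemma toR_eB (t : ℤ) (h : 0 ≤ t) : toR k t h (eB k t) = 1 := by
  cases t with
  | ofNat n => rfl
  | negSucc n => exact absurd h (Int.negSucc_lt_zero n).not_ge

lemma toR_actL (t : ℤ) (h : 0 ≤ t) (a : TP k) (z : PC k t) :
    toR k t h ((actC k).actL t a z) = (a ⊗ₜ[k] (1 : TP k)) * toR k t h z := by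
  cases t with
  | ofNat n =>
    rfl
  | negSucc n => exact absurd h (Int.negSucc_lt_zero n).not_ge

lemma toR_actR (t : ℤ) (h : 0 ≤ t) (b : (TP k)ᵐᵒᵖ) (z : PC k t) :
    toR k t h ((actC k).actR t b z) = ((1 : TP k) ⊗ₜ[k] (unop b)) * toR k t h z := by
  cases t with
  | ofNat n =>
    rfl
  | negSucc n => exact absurd h (Int.negSucc_lt_zero n).not_ge

lemma dC_apply' (t : ℤ) (h : 1 ≤ t) (z : PC k t) :
    toR k (t - 1) (by omega) (dC k t z)
      = (if Odd t then uE k else vE k) * toR k t (by omega) z := by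
  rw [dC, dif_pos h]
  simp only [LinearMap.comp_apply, LinearEquiv.coe_coe, LinearMap.mulLeft_apply]
  exact LinearEquiv.apply_symm_apply _ _

lemma dC_zero' (t : ℤ) (h : ¬ 1 ≤ t) : dC k t = 0 := by
  rw [dC, dif_neg h]

lemma dC_actL (t : ℤ) (a : TP k) (z : PC k t) :
    dC k t ((actC k).actL t a z) = (actC k).actL (t - 1) a (dC k t z) := by
  by_cases h : 1 ≤ t
  · apply (toR k (t - 1) (by omega)).injective
    rw [dC_apply' k t h, toR_actL k t (by omega), toR_actL k (t - 1) (by omega),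
      dC_apply' k t h]
    ring
  · rw [dC_zero' k t h]
    simp

lemma dC_actR (t : ℤ) (b : (TP k)ᵐᵒᵖ) (z : PC k t) :
    dC k t ((actC k).actR t b z) = (actC k).actR (t - 1) b (dC k t z) := by
  by_cases h : 1 ≤ t
  · apply (toR k (t - 1) (by omega)).injective
    rw [dC_apply' k t h, toR_actR k t (by omega), toR_actR k (t - 1) (by omega),
      dC_apply' k t h]
    ring
  · rw [dC_zero' k t h]
    simp

lemma dC_isBimap (t : ℤ) : IsBimap (actC k) (dC k t) :=
  ⟨fun a => LinearMap.ext fun z => by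
      simp only [LinearMap.comp_apply]; exact dC_actL k t a z,
   fun b => LinearMap.ext fun z => by
      simp only [LinearMap.comp_apply]; exact dC_actR k t b z⟩

lemma dC_eB (t : ℤ) (h : 1 ≤ t) :
    dC k t (eB k t)
      = (actC k).actL (t - 1) (xGen k) (eB k (t - 1))
        + (t.negOnePow : ℤ) • (actC k).actR (t - 1) (op (xGen k)) (eB k (t - 1)) := by
  apply (toR k (t - 1) (by omega)).injective
  rw [dC_apply' k t h, toR_eB, mul_one, map_add, map_zsmul,
    toR_actL k (t - 1) (by omega), toR_actR k (t - 1) (by omega), toR_eB, mul_one, mul_one]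
  rcases Int.even_or_odd t with he | ho
  · rw [if_neg (Int.not_odd_iff_even.mpr he), Int.negOnePow_even t he]
    simp [vE]
  · rw [if_pos ho, Int.negOnePow_odd t ho]
    simp [uE, sub_eq_add_neg]

lemma gen_eq (t : ℤ) (h : 0 ≤ t) (a b : TP k) :
    (actC k).actL t a ((actC k).actR t (op b) (eB k t)) = (toR k t h).symm (a ⊗ₜ[k] b) := by
  apply (toR k t h).injective
  rw [toR_actL k t h, toR_actR k t h, toR_eB, mul_one, LinearEquiv.apply_symm_apply]
  show _ = a ⊗ₜ[k] b
  rw [unop_op, Algebra.TensorProduct.tmul_mul_tmul, one_mul, mul_one]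

lemma extPC (t : ℤ) (h : 0 ≤ t) {M : Type u} [AddCommGroup M] [Module k M]
    (F G : PC k t →ₗ[k] M)
    (hfg : ∀ a b : TP k,
      F ((actC k).actL t a ((actC k).actR t (op b) (eB k t)))
        = G ((actC k).actL t a ((actC k).actR t (op b) (eB k t)))) : F = G := by
  have h2 : F ∘ₗ (toR k t h).symm.toLinearMap = G ∘ₗ (toR k t h).symm.toLinearMap := by
    apply TensorProduct.ext'
    intro a b
    simp only [LinearMap.comp_apply, LinearEquiv.coe_coe]
    rw [← gen_eq k t h a b]
    exact hfg a b
  ext z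
  have h3 := LinearMap.congr_fun h2 (toR k t h z)
  simp only [LinearMap.comp_apply, LinearEquiv.coe_coe, LinearEquiv.symm_apply_apply] at h3
  exact h3

lemma pcast_eB {t t' : ℤ} (h : t = t') :
    pcast (k := k) (P := PC k) h (eB k t) = eB k t' := by
  subst h; rfl

end AuxConcrete
section AuxMu

variable (k)

lemma muC_mul' (w z : RA k) :
    LinearMap.mul' k (TP k) (w * z)
      = LinearMap.mul' k (TP k) w * LinearMap.mul' k (TP k) z := by
  rw [← Algebra.TensorProduct.lmul'_toLinearMap]
  exact map_mul (Algebra.TensorProduct.lmul' (S := TP k) k) w z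

lemma muC_apply (w : PC k 0) :
    muC k w = LinearMap.mul' k (TP k) (toR k 0 le_rfl w) := rfl

lemma muC_actL (a : TP k) (z : PC k 0) :
    muC k ((actC k).actL 0 a z) = a * muC k z := by
  rw [muC_apply, muC_apply, toR_actL k 0 le_rfl, muC_mul', LinearMap.mul'_apply, mul_one]

lemma muC_actR (b : TP k) (z : PC k 0) :
    muC k ((actC k).actR 0 (op b) z) = muC k z * b := by
  rw [muC_apply, muC_apply, toR_actR k 0 le_rfl, muC_mul', LinearMap.mul'_apply, unop_op,
    one_mul, mul_comm]

lemma muC_eB : muC k (eB k 0) = 1 := by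
  rw [muC_apply, toR_eB, Algebra.TensorProduct.one_def, LinearMap.mul'_apply, mul_one]

lemma muCollapse_lof_tmulA (p : DiagIdx 0) (h1 : p.1.1 = 0) (h2 : p.1.2 = 0)
    (x : PC k p.1.1) (y : PC k p.1.2) :
    muCollapse (actC k) (muC k) (inclDT (actC k) p (tmulA (actC k) x y))
      = muC k (pcast (k := k) (P := PC k) h1 x) * muC k (pcast (k := k) (P := PC k) h2 y) := by
  have hker : bal (actC k) 0 0 ≤ LinearMap.ker
      (TensorProduct.lift (((LinearMap.mul k (TP k)) ∘ₗ muC k).compl₂ (muC k))) := by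
    rw [bal, Submodule.span_le]
    rintro z ⟨a, x0, y0, rfl⟩
    simp only [SetLike.mem_coe, LinearMap.mem_ker, map_sub, TensorProduct.lift.tmul,
      LinearMap.compl₂_apply, LinearMap.comp_apply, LinearMap.mul_apply']
    rw [muC_actR, muC_actL]
    ring_nf
  rw [muCollapse, show inclDT (actC k) p (tmulA (actC k) x y)
      = DirectSum.lof k (DiagIdx 0) (fun q : DiagIdx 0 => TensA (actC k) q.1.1 q.1.2) p
        (tmulA (actC k) x y) from rfl,
    DirectSum.toModule_lof, dif_pos h1]
  simp only [LinearMap.comp_apply]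
  rw [tcast_tmulA]
  rw [liftQOr0, dif_pos hker]
  rw [tmulA, Submodule.liftQ_apply, TensorProduct.lift.tmul]
  simp only [LinearMap.compl₂_apply, LinearMap.comp_apply, LinearMap.mul_apply']

end AuxMu
section AuxTerms

variable (k)

/-- First piece of `dDT` applied to the `j`-th diagonal generator. -/
def Aterm (i : ℤ) (j : ℕ) : DTarget (actC k) (i - 1) :=
  inclDT (actC k) (⟨((j : ℤ) - 1, i - (j : ℤ)), by ring⟩ : DiagIdx (i - 1))
    (tmulA (actC k) (dC k (j : ℤ) (eB k (j : ℤ))) (eB k (i - (j : ℤ))))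

/-- Second piece of `dDT` applied to the `j`-th diagonal generator. -/
def Bterm (i : ℤ) (j : ℕ) : DTarget (actC k) (i - 1) :=
  ((j : ℤ).negOnePow : ℤ) •
    inclDT (actC k) (⟨((j : ℤ), i - (j : ℤ) - 1), by ring⟩ : DiagIdx (i - 1))
      (tmulA (actC k) (eB k (j : ℤ)) (dC k (i - (j : ℤ)) (eB k (i - (j : ℤ)))))

/-- Canonical left term. -/
def XLt (i : ℤ) (j : ℕ) : DTarget (actC k) (i - 1) :=
  inclDT (actC k) (⟨((j : ℤ), i - 1 - (j : ℤ)), by ring⟩ : DiagIdx (i - 1))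
    (tmulA (actC k) ((actC k).actL (j : ℤ) (xGen k) (eB k (j : ℤ))) (eB k (i - 1 - (j : ℤ))))

/-- Canonical right term. -/
def XRt (i : ℤ) (j : ℕ) : DTarget (actC k) (i - 1) :=
  inclDT (actC k) (⟨((j : ℤ), i - 1 - (j : ℤ)), by ring⟩ : DiagIdx (i - 1))
    (tmulA (actC k) (eB k (j : ℤ))
      ((actC k).actR (i - 1 - (j : ℤ)) (op (xGen k)) (eB k (i - 1 - (j : ℤ)))))

/-- Canonical middle term. -/
def XMt (i : ℤ) (j : ℕ) : DTarget (actC k) (i - 1) :=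
  inclDT (actC k) (⟨((j : ℤ), i - 1 - (j : ℤ)), by ring⟩ : DiagIdx (i - 1))
    (tmulA (actC k) (eB k (j : ℤ))
      ((actC k).actL (i - 1 - (j : ℤ)) (xGen k) (eB k (i - 1 - (j : ℤ)))))

lemma dDT_eB_term (i : ℤ) (j : ℕ)
    (pf : ((j : ℤ), i - (j : ℤ)).1 + ((j : ℤ), i - (j : ℤ)).2 = i) :
    dDT (actC k) (dC k) i (inclDT (actC k) (⟨((j : ℤ), i - (j : ℤ)), pf⟩ : DiagIdx i)
        (tmulA (actC k) (eB k (j : ℤ)) (eB k (i - (j : ℤ)))))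
      = Aterm k i j + Bterm k i j := by
  rw [dDT_lof]
  rw [mapTensA_tmulA (actC k) _ _ (fun b => (dC_isBimap k _).2 b)
      (fun a => by rw [LinearMap.id_comp, LinearMap.comp_id]),
    mapTensA_tmulA (actC k) _ _ (fun b => by rw [LinearMap.id_comp, LinearMap.comp_id])
      (fun a => (dC_isBimap k _).1 a)]
  rfl

lemma Aterm_zero (i : ℤ) : Aterm k i 0 = 0 := by
  rw [Aterm, dC_zero' k _ (by simp), LinearMap.zero_apply, tmulA_zero_left, map_zero]

lemma Bterm_last (i : ℤ) (hi : 1 ≤ i) : Bterm k i i.toNat = 0 := by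
  rw [Bterm, dC_zero' k _ (by omega), LinearMap.zero_apply, tmulA_zero_right, map_zero,
    smul_zero]

lemma splitTerm (i : ℤ) (hi : 1 ≤ i) (j : ℕ) (hj : (j : ℤ) < i) :
    Aterm k i (j + 1) + Bterm k i j = XLt k i j + (i.negOnePow : ℤ) • XRt k i j := by
  have hc := actC_comm k
  have hcast : ((j + 1 : ℕ) : ℤ) = (j : ℤ) + 1 := by push_cast; ring
  have hA : Aterm k i (j + 1)
      = XLt k i j + (((j : ℤ) + 1).negOnePow : ℤ) • XMt k i j := by
    rw [Aterm, dC_eB k ((j + 1 : ℕ) : ℤ) (by omega), tmulA_add_left, tmulA_zsmul_left,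
      tmulA_balance, map_add, map_zsmul]
    simp only [inclDT_congr (actC k)
        (show (⟨(((j + 1 : ℕ) : ℤ) - 1, i - ((j + 1 : ℕ) : ℤ)), by ring⟩ : DiagIdx (i - 1))
            = ⟨((j : ℤ), i - 1 - (j : ℤ)), by ring⟩ from
          Subtype.ext (Prod.ext
            (show ((j + 1 : ℕ) : ℤ) - 1 = (j : ℤ) by omega)
            (show i - ((j + 1 : ℕ) : ℤ) = i - 1 - (j : ℤ) by omega)))
        (show ((j + 1 : ℕ) : ℤ) - 1 = (j : ℤ) by omega)
        (show i - ((j + 1 : ℕ) : ℤ) = i - 1 - (j : ℤ) by omega)]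
    simp only [tcast_tmulA, pcast_actL, pcast_actR, pcast_eB]
    rw [hcast]
    rfl
  have hB : Bterm k i j
      = ((j : ℤ).negOnePow : ℤ) • XMt k i j
        + (((j : ℤ).negOnePow : ℤ) * ((i - (j : ℤ)).negOnePow : ℤ)) • XRt k i j := by
    rw [Bterm, dC_eB k (i - (j : ℤ)) (by omega), tmulA_add_right, tmulA_zsmul_right,
      map_add, map_zsmul]
    simp only [inclDT_congr (actC k)
        (show (⟨((j : ℤ), i - (j : ℤ) - 1), by ring⟩ : DiagIdx (i - 1))
            = ⟨((j : ℤ), i - 1 - (j : ℤ)), by ring⟩ from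
          Subtype.ext (Prod.ext rfl (show i - (j : ℤ) - 1 = i - 1 - (j : ℤ) by omega)))
        rfl (show i - (j : ℤ) - 1 = i - 1 - (j : ℤ) by omega)]
    simp only [tcast_tmulA, pcast_actL, pcast_actR, pcast_eB]
    rw [smul_add, smul_smul]
    rfl
  rw [hA, hB, Int.negOnePow_succ, Units.val_neg, neg_smul]
  rw [show ((j : ℤ).negOnePow : ℤ) * ((i - (j : ℤ)).negOnePow : ℤ) = (i.negOnePow : ℤ) by
    rw [← Units.val_mul, ← Int.negOnePow_add]
    congr 2
    ring]
  abel

lemma RHSLterm (i : ℤ) (j : ℕ)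
    (pf : ((j : ℤ), i - 1 - (j : ℤ)).1 + ((j : ℤ), i - 1 - (j : ℤ)).2 = i - 1) :
    actLDT (actC k) (i - 1) (xGen k)
      (inclDT (actC k) (⟨((j : ℤ), i - 1 - (j : ℤ)), pf⟩ : DiagIdx (i - 1))
        (tmulA (actC k) (eB k (j : ℤ)) (eB k (i - 1 - (j : ℤ)))))
      = XLt k i j := by
  rw [actLDT_lof, actLTensA_tmulA _ (actC_comm k)]
  rfl

lemma RHSRterm (i : ℤ) (j : ℕ)
    (pf : ((j : ℤ), i - 1 - (j : ℤ)).1 + ((j : ℤ), i - 1 - (j : ℤ)).2 = i - 1) :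
    actRDT (actC k) (i - 1) (op (xGen k))
      (inclDT (actC k) (⟨((j : ℤ), i - 1 - (j : ℤ)), pf⟩ : DiagIdx (i - 1))
        (tmulA (actC k) (eB k (j : ℤ)) (eB k (i - 1 - (j : ℤ)))))
      = XRt k i j := by
  rw [actRDT_lof, actRTensA_tmulA _ (actC_comm k)]
  rfl

end AuxTerms
/-!
STATEMENT 12: The `(A⊗A)`-linear maps `Δ_i : P_i → (P ⊗_A P)_i = ⨁_{j+l=i} P_j ⊗_A P_l`
determined by `Δ_i(e_i) = Σ_{j+l=i} e_j ⊗ e_l` form a chain map `Δ_P : P → P ⊗_A P`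
lifting the identity map of `A`: `d^{P⊗_AP} ∘ Δ_i = Δ_{i−1} ∘ d_i` for all `i ≥ 1`,
and in degree `0` the map `Δ_0` is compatible with the augmentation under the
identification `A ⊗_A A ≅ A`.  Here `A = k[x]/(x²)` (char `k` = 0), and `P` is the
2-periodic resolution with `P_i = A ⊗ A` and differentials alternately multiplication
by `u = x⊗1 − 1⊗x` and `v = x⊗1 + 1⊗x`.
-/

theorem concrete_delta_chain_map (k : Type u) [Field k] [CharZero k]
    -- `Δ` is the family of `(A⊗A)`-linear maps with `Δ(e_i) = Σ_{j+l=i} e_j ⊗ e_l`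
    (Δ : ∀ i, PC k i →ₗ[k] DTarget (actC k) i)
    (hLin : ∀ (i : ℤ) (a : TP k),
      Δ i ∘ₗ (actC k).actL i a = actLDT (actC k) i a ∘ₗ Δ i)
    (hRin : ∀ (i : ℤ) (b : (TP k)ᵐᵒᵖ),
      Δ i ∘ₗ (actC k).actR i b = actRDT (actC k) i b ∘ₗ Δ i)
    (hval : ∀ i : ℤ, 0 ≤ i → Δ i (eB k i) =
      ∑ j ∈ Finset.range (i.toNat + 1),
        inclDT (actC k) (⟨((j : ℤ), i - (j : ℤ)), by omega⟩ : DiagIdx i)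
          (tmulA (actC k) (eB k (j : ℤ)) (eB k (i - (j : ℤ))))) :
    -- `Δ` is a chain map …
    (∀ i : ℤ, 1 ≤ i → dDT (actC k) (dC k) i ∘ₗ Δ i = Δ (i - 1) ∘ₗ dC k i) ∧
    -- … lifting the identity map of `A`
    (∀ z : PC k 0, muCollapse (actC k) (muC k) (Δ 0 z) = muC k z) := by
  have hc := actC_comm k
  have hLp : ∀ (t : ℤ) (a : TP k) (z : PC k t),
      Δ t ((actC k).actL t a z) = actLDT (actC k) t a (Δ t z) := fun t a z => by
    have h := LinearMap.congr_fun (hLin t a) z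
    simpa using h
  have hRp : ∀ (t : ℤ) (b : (TP k)ᵐᵒᵖ) (z : PC k t),
      Δ t ((actC k).actR t b z) = actRDT (actC k) t b (Δ t z) := fun t b z => by
    have h := LinearMap.congr_fun (hRin t b) z
    simpa using h
  constructor
  · intro i hi
    have key : dDT (actC k) (dC k) i (Δ i (eB k i)) = Δ (i - 1) (dC k i (eB k i)) := by
      rw [hval i (by omega), map_sum]
      simp only [dDT_eB_term k i]
      rw [Finset.sum_add_distrib,
        Finset.sum_range_succ' (fun j => Aterm k i j) i.toNat,
        Finset.sum_range_succ (fun j => Bterm k i j) i.toNat]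
      simp only [Aterm_zero k i, Bterm_last k i hi, add_zero]
      rw [← Finset.sum_add_distrib]
      rw [Finset.sum_congr rfl (fun j hj => splitTerm k i hi j
        (by have := Finset.mem_range.mp hj; omega))]
      rw [Finset.sum_add_distrib, ← Finset.smul_sum]
      rw [dC_eB k i hi, map_add, map_zsmul, hLp, hRp, hval (i - 1) (by omega),
        show (i - 1).toNat + 1 = i.toNat from by omega, map_sum, map_sum]
      simp only [RHSLterm k i, RHSRterm k i]
    refine extPC k i (by omega) _ _ ?_
    intro a b
    have hdL : ∀ (a : TP k) (z : DTarget (actC k) i),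
        dDT (actC k) (dC k) i (actLDT (actC k) i a z)
          = actLDT (actC k) (i - 1) a (dDT (actC k) (dC k) i z) := fun a z => by
      have h := LinearMap.congr_fun (dDT_actLDT (actC k) hc (dC k) (dC_isBimap k) i a) z
      simpa using h
    have hdR : ∀ (b : (TP k)ᵐᵒᵖ) (z : DTarget (actC k) i),
        dDT (actC k) (dC k) i (actRDT (actC k) i b z)
          = actRDT (actC k) (i - 1) b (dDT (actC k) (dC k) i z) := fun b z => by
      have h := LinearMap.congr_fun (dDT_actRDT (actC k) hc (dC k) (dC_isBimap k) i b) z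
      simpa using h
    simp only [LinearMap.comp_apply]
    rw [hLp, hRp, hdL, hdR, key, ← hRp, ← hLp, ← dC_actR, ← dC_actL]
  · have hF : (muCollapse (actC k) (muC k)) ∘ₗ Δ 0 = muC k := by
      refine extPC k 0 le_rfl _ _ ?_
      intro a b
      have hval0 := hval 0 le_rfl
      rw [show (0 : ℤ).toNat + 1 = 1 from rfl, Finset.sum_range_one] at hval0
      simp only [LinearMap.comp_apply]
      rw [hLp, hRp, hval0, actRDT_lof, actRTensA_tmulA _ hc, actLDT_lof,
        actLTensA_tmulA _ hc]
      rw [muCollapse_lof_tmulA k _ (by simp) (by simp)]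
      rw [pcast_actL, pcast_actR, pcast_eB, pcast_eB]
      rw [muC_actL, muC_actR, muC_eB, muC_actL, muC_actR, muC_eB]
      ring
    intro z
    exact LinearMap.congr_fun hF z

end HLPaper

end
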